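/- Models as an inverter: let T be a sketch given by a triangle τ : w ∘ u ⟹ v over C in a sub-bicategory K of maps, where u : A ⟶ B. Suppose X is u-complete, so that the precomposition functor K(u,1) : K(B,X) ⟶ K(A,X) has a right adjoint ran_u. Then the full subcategory Mdl(T, X) of K(C,X) consisting of models of T is the inverter (in Cat) of the natural transformation K(w,1) ⟹ ran_u ∘ K(v,1) obtained as the mate of the composite K(u,1) ∘ K(w,1) ≅ K(w∘u, 1) ⟹ K(v,1) induced by τ; i.e. f : C ⟶ X is a model iff the component of this mate at f is invertible. -/

import Mathlib

open CategoryTheory Bicategory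

universe w' v' u'

variable {K : Type u'} [Bicategory.{w', v'} K]

/-- `ρ : j ≫ r ⟶ f` exhibits `r` as a (pointwise) right extension of `f` along `j`. -/
def IsRightExt {A B X : K} (j : A ⟶ B) (f : A ⟶ X)
    (r : B ⟶ X) (ρ : j ≫ r ⟶ f) : Prop :=
  ∀ g : B ⟶ X, Function.Bijective (fun θ : g ⟶ r => j ◁ θ ≫ ρ)

/-- The precomposition functor `K(j,1) : K(B,X) ⥤ K(A,X)`. -/
@[simps]
def precompFunctor {A B : K} (j : A ⟶ B) (X : K) : (B ⟶ X) ⥤ (A ⟶ X) where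
  obj g := j ≫ g
  map θ := j ◁ θ

/-- Models as an inverter: let `T` be a sketch given by a triangle `τ : w ∘ u ⟶ v`
over `C` (with `u : A ⟶ B`), and let `X` be `u`-complete, i.e. the precomposition
functor `K(u,1)` has a right adjoint `ran_u` whose counit exhibits pointwise right
extensions.  Then `f : C ⟶ X` is a model of `T` (the whiskering `f ∘ τ` exhibits
`f ∘ w` as a pointwise right extension of `f ∘ v` along `u`) if and only if the
component at `f` of the mate `K(w,1) ⟶ ran_u ∘ K(v,1)` of the natural transformation
induced by `τ` is invertible; hence `Mdl(T,X)` is the inverter of this mate. -/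
theorem model_iff_mate_component_isIso
    {A B C X : K} (u : A ⟶ B) (v : A ⟶ C) (w : B ⟶ C) (τ : u ≫ w ⟶ v)
    (ranu : (A ⟶ X) ⥤ (B ⟶ X)) (adj : precompFunctor u X ⊣ ranu)
    (hpt : ∀ g : A ⟶ X, IsRightExt u g (ranu.obj g) (adj.counit.app g))
    (f : C ⟶ X) :
    IsRightExt u (v ≫ f) (w ≫ f) ((α_ u w f).inv ≫ τ ▷ f) ↔
      IsIso ((adj.homEquiv (w ≫ f) (v ≫ f)) ((α_ u w f).inv ≫ τ ▷ f)) := by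
  set ρ : u ≫ w ≫ f ⟶ v ≫ f := (α_ u w f).inv ≫ τ ▷ f with hρ
  set θ := (adj.homEquiv (w ≫ f) (v ≫ f)) ρ with hθ
  have hfact : u ◁ θ ≫ adj.counit.app (v ≫ f) = ρ := by
    have h1 := adj.homEquiv_counit (X := w ≫ f) (Y := v ≫ f) (g := θ)
    have h2 : (adj.homEquiv (w ≫ f) (v ≫ f)).symm θ = ρ :=
      (adj.homEquiv (w ≫ f) (v ≫ f)).symm_apply_apply ρ
    simpa [precompFunctor] using h1.symm.trans h2
  have key : ∀ (g : B ⟶ X) (φ : g ⟶ w ≫ f),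
      u ◁ φ ≫ ρ = u ◁ (φ ≫ θ) ≫ adj.counit.app (v ≫ f) := by
    intro g φ
    rw [Bicategory.whiskerLeft_comp]
    exact (congrArg (u ◁ φ ≫ ·) hfact).symm.trans (Category.assoc _ _ _).symm
  rw [isIso_iff_yoneda_map_bijective]
  constructor
  · intro h g
    have h1 := h g
    have h2 := hpt (v ≫ f) g
    have : (fun φ : g ⟶ w ≫ f => u ◁ φ ≫ ρ) =
        (fun ψ : g ⟶ ranu.obj (v ≫ f) => u ◁ ψ ≫ adj.counit.app (v ≫ f)) ∘
          (fun φ : g ⟶ w ≫ f => φ ≫ θ) := by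
      funext φ; exact key g φ
    rw [this] at h1
    exact (Function.Bijective.of_comp_iff' h2 _).mp h1
  · intro h g
    have h2 := hpt (v ≫ f) g
    have : (fun φ : g ⟶ w ≫ f => u ◁ φ ≫ ρ) =
        (fun ψ : g ⟶ ranu.obj (v ≫ f) => u ◁ ψ ≫ adj.counit.app (v ≫ f)) ∘
          (fun φ : g ⟶ w ≫ f => φ ≫ θ) := by
      funext φ; exact key g φ
    rw [this]
    exact h2.comp (h g)
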